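/- arXiv:1911.12704 — 2 statements merged into one kernel-verified Lean document; each statement's English description precedes it below -/
import Mathlib

section
/- The Laplace mechanism satisfies ε-DP: for a query u with ℓ₁-global sensitivity Δ₁u, the mechanism M(X) = u(X) + L, where L is Laplace-distributed with location 0 and scale Δ₁u/ε, satisfies ε-differential privacy. -/
/-!
Shifting the Laplace density by `c` instead of `c'` changes it pointwise by at most the factor
`exp (|c - c'| / b)`, by the triangle inequality in the exponent. With scale `b = Δ / ε` and
`|c - c'| ≤ Δ` this factor is at most `exp ε`, and integrating the pointwise bound over `S`
gives the privacy inequality.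
-/

open MeasureTheory Real

/-- The Laplace distribution with location 0 and scale `b`, as a measure on ℝ. -/
noncomputable def laplaceMeasure (b : ℝ) : Measure ℝ :=
  MeasureTheory.volume.withDensity
    (fun x => ENNReal.ofReal ((1 / (2 * b)) * Real.exp (-|x| / b)))

theorem MeasureTheory.Measure.map_withDensity_add_left {G : Type*} [MeasurableSpace G]
    [AddGroup G] [MeasurableAdd G] (μ : Measure G) [μ.IsAddLeftInvariant]
    {f : G → ENNReal} (hf : Measurable f) (c : G) :
    (μ.withDensity f).map (c + ·) = μ.withDensity (fun y => f (-c + y)) := by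
  ext S hS
  rw [Measure.map_apply (measurable_const_add c) hS,
    withDensity_apply _ (measurable_const_add c hS), withDensity_apply _ hS]
  conv_rhs => rw [← map_add_left_eq_self μ c,
    setLIntegral_map (f := fun y => f (-c + y)) hS (hf.comp (measurable_const_add _))
      (measurable_const_add c)]
  simp only [neg_add_cancel_left]

theorem exp_neg_abs_sub_div_le (b c c' y : ℝ) (hb : 0 ≤ b) :
    exp (-|y - c| / b) ≤ exp (|c - c'| / b) * exp (-|y - c'| / b) := by
  rw [← exp_add, exp_le_exp, ← add_div]
  gcongr
  linarith [abs_sub_le y c c']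

theorem laplaceMeasure_map_add_le (b c c' : ℝ) (hb : 0 ≤ b) :
    (laplaceMeasure b).map (c + ·) ≤
      ENNReal.ofReal (exp (|c - c'| / b)) • (laplaceMeasure b).map (c' + ·) := by
  have hdensity : Measurable fun x : ℝ => ENNReal.ofReal (1 / (2 * b) * exp (-|x| / b)) := by
    fun_prop
  rw [laplaceMeasure, Measure.map_withDensity_add_left _ hdensity,
    Measure.map_withDensity_add_left _ hdensity, ← withDensity_smul' _ _ ENNReal.ofReal_ne_top]
  refine withDensity_mono (ae_of_all _ fun y => ?_)
  simp only [Pi.smul_apply, smul_eq_mul, neg_add_eq_sub]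
  rw [← ENNReal.ofReal_mul (exp_nonneg _), mul_left_comm]
  gcongr
  exact exp_neg_abs_sub_div_le b c c' y hb

theorem laplace_mechanism_dp_general {DB : Type*} (neighbor : DB → DB → Prop)
    (u : DB → ℝ) (Δ ε : ℝ) (hε : 0 < ε)
    (hsens : ∀ X X', neighbor X X' → |u X - u X'| ≤ Δ) :
    ∀ X X', neighbor X X' → ∀ S : Set ℝ, MeasurableSet S →
      (laplaceMeasure (Δ / ε)).map (fun y => u X + y) S ≤
        ENNReal.ofReal (Real.exp ε) * (laplaceMeasure (Δ / ε)).map (fun y => u X' + y) S := by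
  intro X X' hXX' S _
  have hdist := hsens X X' hXX'
  have hscale : 0 ≤ Δ / ε := div_nonneg ((abs_nonneg _).trans hdist) hε.le
  have hratio : |u X - u X'| / (Δ / ε) ≤ ε := by
    rw [div_div_eq_mul_div]
    exact div_le_of_le_mul₀ ((abs_nonneg _).trans hdist) hε.le
      (by rw [mul_comm]; exact mul_le_mul_of_nonneg_left hdist hε.le)
  calc (laplaceMeasure (Δ / ε)).map (u X + ·) S
      ≤ (ENNReal.ofReal (exp (|u X - u X'| / (Δ / ε))) •
          (laplaceMeasure (Δ / ε)).map (u X' + ·)) S :=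
        laplaceMeasure_map_add_le _ _ _ hscale S
    _ ≤ ENNReal.ofReal (exp ε) * (laplaceMeasure (Δ / ε)).map (u X' + ·) S := by
        rw [Measure.smul_apply, smul_eq_mul]
        gcongr

/-- The Laplace mechanism satisfies ε-DP: for a real-valued query `u` with global sensitivity
at most `Δ`, adding Laplace(0, Δ/ε) noise yields an ε-differentially private mechanism. -/
theorem laplace_mechanism_dp {DB : Type*} (neighbor : DB → DB → Prop)
    (u : DB → ℝ) (Δ ε : ℝ) (hΔ : 0 < Δ) (hε : 0 < ε)
    (hsens : ∀ X X', neighbor X X' → |u X - u X'| ≤ Δ) :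
    ∀ X X', neighbor X X' → ∀ S : Set ℝ, MeasurableSet S →
      (laplaceMeasure (Δ / ε)).map (fun y => u X + y) S ≤
        ENNReal.ofReal (Real.exp ε) * (laplaceMeasure (Δ / ε)).map (fun y => u X' + y) S :=
  laplace_mechanism_dp_general neighbor u Δ ε hε hsens
end

section
/- The exponential mechanism satisfies ε-DP: the mechanism that outputs θ with probability proportional to exp(ε·u(X, θ)/(2Δ₁u)) satisfies ε-differential privacy. -/
/-- The exponential mechanism satisfies ε-DP: outputting `θ` with probability proportional to
`exp (ε·u(X,θ)/(2Δ))`, where `Δ` bounds the sensitivity of the score function, the point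
probabilities on neighboring databases differ by at most a factor `exp ε`. -/
theorem exponential_mechanism_dp {DB Θ : Type*} [Fintype Θ] [Nonempty Θ]
    (neighbor : DB → DB → Prop) (u : DB → Θ → ℝ) (Δ ε : ℝ) (hΔ : 0 < Δ) (hε : 0 < ε)
    (hsens : ∀ θ X X', neighbor X X' → |u X θ - u X' θ| ≤ Δ) :
    ∀ X X', neighbor X X' → ∀ θ : Θ,
      Real.exp (ε * u X θ / (2 * Δ)) / (∑ θ' : Θ, Real.exp (ε * u X θ' / (2 * Δ))) ≤
        Real.exp ε *
          (Real.exp (ε * u X' θ / (2 * Δ)) / (∑ θ' : Θ, Real.exp (ε * u X' θ' / (2 * Δ)))) := by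
  intro X X' hN θ
  have h2Δ : (0:ℝ) < 2 * Δ := by linarith
  -- pointwise bound: exp(ε u X θ'/(2Δ)) ≤ exp(ε/2) * exp(ε u X' θ'/(2Δ)) and vice versa
  have key : ∀ (Y Y' : DB), neighbor Y Y' → ∀ θ' : Θ,
      Real.exp (ε * u Y θ' / (2 * Δ)) ≤ Real.exp (ε/2) * Real.exp (ε * u Y' θ' / (2 * Δ)) := by
    intro Y Y' hn θ'
    rw [← Real.exp_add]
    apply Real.exp_le_exp.mpr
    have h := abs_le.mp (hsens θ' Y Y' hn)
    rw [← sub_le_iff_le_add, div_sub_div_same, ← mul_sub, div_le_iff₀ h2Δ]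
    nlinarith [h.2]
  have key' : ∀ (Y Y' : DB), neighbor Y' Y → ∀ θ' : Θ,
      Real.exp (ε * u Y θ' / (2 * Δ)) ≤ Real.exp (ε/2) * Real.exp (ε * u Y' θ' / (2 * Δ)) := by
    intro Y Y' hn θ'
    rw [← Real.exp_add]
    apply Real.exp_le_exp.mpr
    have h := abs_le.mp (hsens θ' Y' Y hn)
    rw [← sub_le_iff_le_add, div_sub_div_same, ← mul_sub, div_le_iff₀ h2Δ]
    nlinarith [h.1]
  set A := Real.exp (ε * u X θ / (2 * Δ)) with hA
  set B := Real.exp (ε * u X' θ / (2 * Δ)) with hB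
  set S := ∑ θ' : Θ, Real.exp (ε * u X θ' / (2 * Δ)) with hS
  set S' := ∑ θ' : Θ, Real.exp (ε * u X' θ' / (2 * Δ)) with hS'
  have hSpos : 0 < S := Finset.sum_pos (fun i _ => Real.exp_pos _) Finset.univ_nonempty
  have hS'pos : 0 < S' := Finset.sum_pos (fun i _ => Real.exp_pos _) Finset.univ_nonempty
  have hAB : A ≤ Real.exp (ε/2) * B := key X X' hN θ
  have hSS : S' ≤ Real.exp (ε/2) * S := by
    rw [hS', hS, Finset.mul_sum]
    exact Finset.sum_le_sum fun i _ => key' X' X hN i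
  rw [div_le_iff₀ hSpos, mul_comm (Real.exp ε), mul_assoc, div_mul_eq_mul_div,
    le_div_iff₀ hS'pos]
  have hexp : Real.exp (ε/2) * Real.exp (ε/2) = Real.exp ε := by
    rw [← Real.exp_add]; ring_nf
  have hBpos : 0 < B := Real.exp_pos _
  calc A * S' ≤ (Real.exp (ε/2) * B) * (Real.exp (ε/2) * S) := by
        apply mul_le_mul hAB hSS (le_of_lt hS'pos)
        positivity
    _ = B * (Real.exp ε * S) := by rw [← hexp]; ring
end
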